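/- arXiv:0711.3827 — 3 statements merged into one kernel-verified Lean document; each statement's English description precedes it below -/
import Mathlib

section
/- Fix 0 < ε < 1. If 1 ≤ k = k(n) ≤ n^{1-ε} and r = r(n) ≥ k(n), then the expected number of heterochromatic k-matchings E[Y] = (n!/((n-2k)! · 2^k · k!)) · (r!/((r-k)! · r^k)) tends to infinity as n → ∞. -/
open Finset Filter

open scoped Classical

noncomputable section

/-- A finset of edges of `K_n` forms a matching: all edges are proper (non-loop)
and no two distinct edges share a vertex. -/
def IsMatching {n : ℕ} (M : Finset (Sym2 (Fin n))) : Prop :=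
  (∀ e ∈ M, ¬ e.IsDiag) ∧
    ∀ e ∈ M, ∀ f ∈ M, e ≠ f → ∀ v : Fin n, v ∈ e → v ∉ f

/-- The finset of all `k`-matchings of `K_n`. -/
def matchings (n k : ℕ) : Finset (Finset (Sym2 (Fin n))) :=
  Finset.univ.filter fun M => M.card = k ∧ IsMatching M

/-- All edges in `M` receive the same color under the coloring `c`. -/
def Monochromatic {n r : ℕ} (c : Sym2 (Fin n) → Fin r)
    (M : Finset (Sym2 (Fin n))) : Prop :=
  ∃ col, ∀ e ∈ M, c e = col

/-- Distinct edges in `M` receive pairwise distinct colors under `c`. -/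
def Heterochromatic {n r : ℕ} (c : Sym2 (Fin n) → Fin r)
    (M : Finset (Sym2 (Fin n))) : Prop :=
  ∀ e ∈ M, ∀ f ∈ M, e ≠ f → c e ≠ c f

/-- Probability of an event `P` under a uniformly random `r`-coloring of the
edges of `K_n`. -/
def Pr (n r : ℕ) (P : (Sym2 (Fin n) → Fin r) → Prop) : ℚ :=
  ((Finset.univ.filter P).card : ℚ) / (Fintype.card (Sym2 (Fin n) → Fin r) : ℚ)

/-- Expected number of monochromatic `k`-matchings in a uniformly random
`r`-coloring of the edges of `K_n`. -/
def EXmono (n r k : ℕ) : ℚ :=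
  (∑ c : Sym2 (Fin n) → Fin r,
      (((matchings n k).filter fun M => Monochromatic c M).card : ℚ)) /
    (Fintype.card (Sym2 (Fin n) → Fin r) : ℚ)

/-- Expected number of heterochromatic `k`-matchings in a uniformly random
`r`-coloring of the edges of `K_n`. -/
def EYhet (n r k : ℕ) : ℚ :=
  (∑ c : Sym2 (Fin n) → Fin r,
      (((matchings n k).filter fun M => Heterochromatic c M).card : ℚ)) /
    (Fintype.card (Sym2 (Fin n) → Fin r) : ℚ)

/-- The vertex set `S` spans a monochromatic clique: all edges between distinct
vertices of `S` have one common color. -/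
def MonoClique {n r : ℕ} (c : Sym2 (Fin n) → Fin r) (S : Finset (Fin n)) : Prop :=
  ∃ col, ∀ u ∈ S, ∀ v ∈ S, u ≠ v → c s(u, v) = col

/-- The vertex set `S` spans a heterochromatic clique: distinct edges between
vertices of `S` have pairwise distinct colors. -/
def HeteroClique {n r : ℕ} (c : Sym2 (Fin n) → Fin r) (S : Finset (Fin n)) : Prop :=
  ∀ u ∈ S, ∀ v ∈ S, ∀ w ∈ S, ∀ x ∈ S,
    u ≠ v → w ≠ x → s(u, v) ≠ s(w, x) → c s(u, v) ≠ c s(w, x)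

/-- `T` is the edge set of a tree with vertex set `S`: it consists of
`S.card - 1` proper edges inside `S` and connects all vertices of `S`
(a connected graph on `|S|` vertices with `|S| - 1` edges is a tree). -/
def IsTreeOn {n : ℕ} (S : Finset (Fin n)) (T : Finset (Sym2 (Fin n))) : Prop :=
  T.card + 1 = S.card ∧ (∀ e ∈ T, ¬ e.IsDiag) ∧
    (∀ e ∈ T, ∀ v : Fin n, v ∈ e → v ∈ S) ∧
    ∀ u ∈ S, ∀ v ∈ S,
      (SimpleGraph.fromEdgeSet (↑T : Set (Sym2 (Fin n)))).Reachable u v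

/-! A union of `k` of the `⌊n/2⌋` disjoint edges `{2i, 2i+1}` is a `k`-matching, so there are at
least `C(⌊n/2⌋, k)` of them, and each is heterochromatic with probability
`r(r-1)⋯(r-k+1)/r^k ≥ k!/k^k` (the ratio only grows with `r ≥ k`). Hence
`E[Y] ≥ C(⌊n/2⌋, k) k!/k^k ≥ ((⌊n/2⌋ + 1 - k)/k)^k`, and the base is at least `n^ε/2 - 1`
because `k ≤ n^(1-ε)`. -/

open scoped Nat

theorem card_filter_injOn {α β : Type*} [Fintype α] [DecidableEq α] [Fintype β] (s : Finset α)
    [DecidablePred fun c : α → β => Set.InjOn c s] :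
    #{c : α → β | Set.InjOn c s} =
      (Fintype.card β).descFactorial #s * Fintype.card β ^ (Fintype.card α - #s) := by
  rw [← Fintype.card_subtype]
  have e : {c : α → β // Set.InjOn c s} ≃ (s ↪ β) × ({a // a ∉ s} → β) :=
    ((Equiv.piEquivPiSubtypeProd (· ∈ s) fun _ => β).subtypeEquiv fun c => by
      rw [Set.injOn_iff_injective]; rfl).trans
    (Equiv.prodSubtypeFstEquivSubtypeProd.trans
      (Equiv.prodCongr (Equiv.subtypeInjectiveEquivEmbedding _ _) (Equiv.refl _)))
  rw [Fintype.card_congr e, Fintype.card_prod, Fintype.card_embedding_eq, Fintype.card_fun,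
    Fintype.card_coe, Fintype.card_subtype_compl, Fintype.card_coe]

theorem heterochromatic_iff_injOn {n r : ℕ} (c : Sym2 (Fin n) → Fin r)
    (M : Finset (Sym2 (Fin n))) : Heterochromatic c M ↔ Set.InjOn c M :=
  ⟨fun h _ he _ hf hc => not_not.mp fun hne => h _ he _ hf hne hc,
    fun h _ he _ hf hne hc => hne (h he hf hc)⟩

theorem Pr_heterochromatic {n r : ℕ} (hr : 0 < r) (M : Finset (Sym2 (Fin n))) :
    Pr n r (Heterochromatic · M) = (r.descFactorial #M : ℚ) / r ^ #M := by
  have hM : #M ≤ Fintype.card (Sym2 (Fin n)) := card_le_univ M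
  rw [Pr, filter_congr fun c _ => heterochromatic_iff_injOn c M, card_filter_injOn,
    Fintype.card_fun, Fintype.card_fin, ← Nat.add_sub_of_le hM, Nat.add_sub_cancel_left, pow_add]
  push_cast
  rw [mul_div_mul_right _ _ (by positivity)]

theorem EYhet_eq_sum_Pr (n r k : ℕ) :
    EYhet n r k = ∑ M ∈ matchings n k, Pr n r (Heterochromatic · M) := by
  simp only [EYhet, Pr, ← sum_div]
  congr 1
  exact_mod_cast sum_card_bipartiteAbove_eq_sum_card_bipartiteBelow
    (fun c M => Heterochromatic c M) (s := univ) (t := matchings n k)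

theorem EYhet_eq {n r k : ℕ} (hr : 0 < r) :
    EYhet n r k = #(matchings n k) * ((r.descFactorial k : ℚ) / r ^ k) := by
  rw [EYhet_eq_sum_Pr, ← nsmul_eq_mul, ← sum_const]
  refine sum_congr rfl fun M hM => ?_
  rw [Pr_heterochromatic hr, (mem_filter.mp hM).2.1]

theorem Nat.factorial_mul_pow_le_descFactorial_mul_pow {k r : ℕ} (hkr : k ≤ r) :
    k ! * r ^ k ≤ r.descFactorial k * k ^ k := by
  rw [← Nat.descFactorial_self, Nat.descFactorial_eq_prod_range, Nat.descFactorial_eq_prod_range,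
    pow_eq_prod_const, pow_eq_prod_const, ← prod_mul_distrib, ← prod_mul_distrib]
  refine prod_le_prod' fun i hi => ?_
  rw [Nat.sub_mul, Nat.sub_mul, mul_comm k r]
  exact Nat.sub_le_sub_left (Nat.mul_le_mul_left i hkr) _

def pairEdge (n : ℕ) (i : Fin (n / 2)) : Sym2 (Fin n) :=
  s(⟨2 * i, by omega⟩, ⟨2 * i + 1, by omega⟩)

theorem pairEdge_injective (n : ℕ) : Function.Injective (pairEdge n) := by
  intro i j h
  simp only [pairEdge, Sym2.eq_iff, Fin.mk.injEq] at h
  omega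

theorem mem_pairEdge {n : ℕ} {i : Fin (n / 2)} {v : Fin n} :
    v ∈ pairEdge n i ↔ (v : ℕ) / 2 = i := by
  simp only [pairEdge, Sym2.mem_iff, Fin.ext_iff]
  omega

theorem isMatching_map_pairEdge {n : ℕ} (S : Finset (Fin (n / 2))) :
    IsMatching (S.map ⟨pairEdge n, pairEdge_injective n⟩) := by
  simp only [IsMatching, forall_mem_map, Function.Embedding.coeFn_mk]
  refine ⟨fun i _ => ?_, fun i _ j _ hij v hvi hvj => ?_⟩
  · simp only [pairEdge, Sym2.mk_isDiag_iff, Fin.mk.injEq]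
    omega
  · rw [mem_pairEdge] at hvi hvj
    exact hij (congrArg _ (Fin.ext (hvi.symm.trans hvj)))

theorem choose_le_card_matchings (n k : ℕ) : (n / 2).choose k ≤ #(matchings n k) := by
  rw [← Fintype.card_fin (n / 2), ← card_univ, ← card_powersetCard]
  refine card_le_card_of_injOn (fun S => S.map ⟨pairEdge n, pairEdge_injective n⟩)
    (fun S hS => ?_) fun S _ T _ h => map_injective _ h
  rw [mem_coe, mem_powersetCard] at hS
  rw [mem_coe, matchings, mem_filter]
  exact ⟨mem_univ _, (card_map _).trans hS.2, isMatching_map_pairEdge S⟩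

theorem le_EYhet {n r k : ℕ} (hr : 0 < r) (hkr : k ≤ r) :
    (((n / 2 + 1 - k : ℕ) : ℝ) / k) ^ k ≤ EYhet n r k := by
  have hkk : (0 : ℝ) < (k : ℝ) ^ k := by
    rcases k.eq_zero_or_pos with rfl | hk
    · simp
    · positivity
  have hratio : (k ! : ℝ) / k ^ k ≤ (r.descFactorial k : ℝ) / r ^ k := by
    rw [div_le_div_iff₀ hkk (by positivity)]
    exact_mod_cast Nat.factorial_mul_pow_le_descFactorial_mul_pow hkr
  rw [EYhet_eq hr]
  push_cast
  calc (((n / 2 + 1 - k : ℕ) : ℝ) / k) ^ k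
      ≤ ((n / 2).descFactorial k : ℝ) / k ^ k := by
        rw [div_pow]
        gcongr
        exact_mod_cast Nat.pow_sub_le_descFactorial _ _
    _ = (n / 2).choose k * ((k ! : ℝ) / k ^ k) := by
        rw [Nat.descFactorial_eq_factorial_mul_choose]
        push_cast
        ring
    _ ≤ #(matchings n k) * ((r.descFactorial k : ℝ) / r ^ k) := by
        gcongr
        exact_mod_cast choose_le_card_matchings n k

theorem rpow_div_two_sub_one_le {ε : ℝ} {n k : ℕ} (hn : 0 < n) (hk : 0 < k)
    (hkn : (k : ℝ) ≤ (n : ℝ) ^ (1 - ε)) :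
    (n : ℝ) ^ ε / 2 - 1 ≤ ((n / 2 + 1 - k : ℕ) : ℝ) / k := by
  have hsplit : (n : ℝ) ^ ε * (n : ℝ) ^ (1 - ε) = n := by
    rw [← Real.rpow_add (by positivity)]
    simp
  have hkn' : (n : ℝ) ^ ε * k ≤ n :=
    (mul_le_mul_of_nonneg_left hkn (Real.rpow_nonneg n.cast_nonneg ε)).trans_eq hsplit
  have hhalf : (n : ℝ) + 1 ≤ 2 * ((n / 2 + 1 - k : ℕ) : ℝ) + 2 * k := by
    exact_mod_cast (by omega : n + 1 ≤ 2 * (n / 2 + 1 - k) + 2 * k)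
  rw [le_div_iff₀ (by exact_mod_cast hk)]
  linarith

theorem expectation_hetero_matchings_tendsto_atTop_general (ε : ℝ) (hε0 : 0 < ε)
    (k r : ℕ → ℕ)
    (h : ∀ᶠ n in atTop,
      1 ≤ k n ∧ (k n : ℝ) ≤ (n : ℝ) ^ ((1 : ℝ) - ε) ∧ k n ≤ r n) :
    Tendsto (fun n => ((EYhet n (r n) (k n) : ℚ) : ℝ)) atTop atTop := by
  have hgrowth : Tendsto (fun n : ℕ => (n : ℝ) ^ ε / 2 - 1) atTop atTop :=
    tendsto_atTop_add_const_right _ _ <|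
      ((tendsto_rpow_atTop hε0).comp tendsto_natCast_atTop_atTop).atTop_div_const two_pos
  refine tendsto_atTop_mono' atTop ?_ hgrowth
  filter_upwards [h, hgrowth.eventually_ge_atTop 1, eventually_gt_atTop 0]
    with n ⟨hk, hkn, hkr⟩ hg hn
  have hbase := rpow_div_two_sub_one_le hn hk hkn
  calc (n : ℝ) ^ ε / 2 - 1
      ≤ ((n / 2 + 1 - k n : ℕ) : ℝ) / k n := hbase
    _ ≤ (((n / 2 + 1 - k n : ℕ) : ℝ) / k n) ^ k n := le_self_pow₀ (hg.trans hbase) (by omega)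
    _ ≤ _ := le_EYhet (by omega) hkr

/-- if `1 ≤ k(n) ≤ n^(1-ε)` and `r(n) ≥ k(n)`, then the expected
number of heterochromatic `k(n)`-matchings tends to infinity. -/
theorem expectation_hetero_matchings_tendsto_atTop (ε : ℝ) (hε0 : 0 < ε)
    (hε1 : ε < 1) (k r : ℕ → ℕ)
    (h : ∀ᶠ n in atTop,
      1 ≤ k n ∧ (k n : ℝ) ≤ (n : ℝ) ^ ((1 : ℝ) - ε) ∧ k n ≤ r n) :
    Tendsto (fun n => ((EYhet n (r n) (k n) : ℚ) : ℝ)) atTop atTop :=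
  expectation_hetero_matchings_tendsto_atTop_general ε hε0 k r h

end
end

section
/- Fix 0 < ε < 1. If 1 ≤ k = k(n) ≤ n^{1-ε} and r = r(n) ≥ k(n), then the probability that a uniformly random r-coloring of the edges of K_n contains a heterochromatic k-matching tends to 1 as n → ∞. -/
open Finset Filter

open scoped Classical

noncomputable section

/-! A heterochromatic matching can be grown greedily, one edge at a time, unless at some stage
every edge avoiding the at most `2j` vertices already covered has one of the `j` colours already
used. For a fixed vertex set `W` and colour set `C` this has probability `(j/r)^q` with
`q = binom(n - 2j, 2) ≥ n²/8`, and there are at most `2^n · binom(r, j)` such pairs. Since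
`binom(r, j) (j/r)^j ≤ j^j/j! ≤ e^j`, the greedy construction of a `k = j + 1` matching fails
with probability at most `exp(2n - n²/(8k)) ≤ exp(2n - n^(1+ε)/8) → 0`. -/

section Probability

variable {n r : ℕ}

lemma Pr_le_one (P : (Sym2 (Fin n) → Fin r) → Prop) : Pr n r P ≤ 1 :=
  div_le_one_of_le₀ (mod_cast card_le_univ _) (Nat.cast_nonneg _)

lemma Pr_mono {P Q : (Sym2 (Fin n) → Fin r) → Prop} (h : ∀ c, P c → Q c) :
    Pr n r P ≤ Pr n r Q :=
  div_le_div_of_nonneg_right (mod_cast card_le_card (monotone_filter_right _ fun c _ => h c))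
    (Nat.cast_nonneg _)

lemma Pr_add_Pr_not (hr : 0 < r) (P : (Sym2 (Fin n) → Fin r) → Prop) :
    Pr n r P + Pr n r (fun c => ¬ P c) = 1 := by
  have : Nonempty (Sym2 (Fin n) → Fin r) := ⟨fun _ => ⟨0, hr⟩⟩
  rw [Pr, Pr, ← add_div, div_eq_one_iff_eq (mod_cast Fintype.card_ne_zero), ← Nat.cast_add,
    card_filter_add_card_filter_not, card_univ]

lemma Pr_exists_le {ι : Type*} (s : Finset ι) (P : ι → (Sym2 (Fin n) → Fin r) → Prop) :
    Pr n r (fun c => ∃ i ∈ s, P i c) ≤ ∑ i ∈ s, Pr n r (P i) := by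
  simp only [Pr, ← sum_div]
  gcongr
  norm_cast
  refine (card_le_card fun c hc => ?_).trans card_biUnion_le
  simpa using hc

lemma Pr_forall_mem (hr : 0 < r) (E : Finset (Sym2 (Fin n))) (C : Finset (Fin r)) :
    Pr n r (fun c => ∀ e ∈ E, c e ∈ C) = ((#C : ℚ) / r) ^ #E := by
  have hpi : univ.filter (fun c : Sym2 (Fin n) → Fin r => ∀ e ∈ E, c e ∈ C) =
      Fintype.piFinset fun e => if e ∈ E then C else univ := by
    ext c
    simp only [mem_filter, mem_univ, true_and, Fintype.mem_piFinset]
    refine ⟨fun h e => ?_, fun h e he => by simpa [he] using h e⟩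
    split_ifs with he
    exacts [h e he, mem_univ _]
  unfold Pr
  convert_to ((Fintype.piFinset fun e => if e ∈ E then C else univ).card : ℚ) /
    Fintype.card (Sym2 (Fin n) → Fin r) = _
  · rw [← hpi]
    congr!
  rw [Fintype.card_piFinset, Fintype.card_fun, Fintype.card_fin, Nat.cast_prod,
    Nat.cast_pow, ← Finset.card_univ, ← prod_const, ← prod_div_distrib,
    ← prod_const, ← Fintype.prod_ite_mem E fun _ => (#C : ℚ) / r]
  refine prod_congr rfl fun e _ => ?_
  split_ifs <;> simp [hr.ne']

end Probability

section Matchings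

variable {n r : ℕ}

def edgesAvoiding {α : Type*} [Fintype α] [DecidableEq α] (W : Finset α) : Finset (Sym2 α) :=
  Wᶜ.offDiag.image Sym2.mk.uncurry

lemma mem_edgesAvoiding {α : Type*} [Fintype α] [DecidableEq α] {W : Finset α} {e : Sym2 α} :
    e ∈ edgesAvoiding W ↔ ¬ e.IsDiag ∧ ∀ v ∈ e, v ∉ W := by
  induction e using Sym2.ind with
  | _ a b =>
    simp only [edgesAvoiding, mem_image, mem_offDiag, mem_compl, Prod.exists, Sym2.mk_isDiag_iff,
      Sym2.mem_iff, forall_eq_or_imp, forall_eq, Function.uncurry_apply_pair]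
    constructor
    · rintro ⟨x, y, ⟨hx, hy, hxy⟩, h⟩
      rcases Sym2.eq_iff.1 h with ⟨rfl, rfl⟩ | ⟨rfl, rfl⟩
      exacts [⟨hxy, hx, hy⟩, ⟨hxy.symm, hy, hx⟩]
    · rintro ⟨hab, ha, hb⟩
      exact ⟨a, b, ⟨ha, hb, hab⟩, rfl⟩

lemma card_edgesAvoiding {α : Type*} [Fintype α] [DecidableEq α] (W : Finset α) :
    #(edgesAvoiding W) = (Fintype.card α - #W).choose 2 := by
  rw [edgesAvoiding, Sym2.card_image_offDiag, card_compl]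

lemma IsMatching.insert {M : Finset (Sym2 (Fin n))} {e : Sym2 (Fin n)} (hM : IsMatching M)
    (he : ¬ e.IsDiag) (hdisj : ∀ v ∈ e, ∀ f ∈ M, v ∉ f) : IsMatching (insert e M) := by
  refine ⟨fun f hf => ?_, fun f hf g hg hfg v hvf hvg => ?_⟩
  · rcases mem_insert.1 hf with rfl | hf
    exacts [he, hM.1 f hf]
  · rcases mem_insert.1 hf with rfl | hfM <;> rcases mem_insert.1 hg with rfl | hgM
    · exact hfg rfl
    · exact hdisj v hvf g hgM hvg
    · exact hdisj v hvg f hfM hvf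
    · exact hM.2 f hfM g hgM hfg v hvf hvg

lemma Heterochromatic.insert {c : Sym2 (Fin n) → Fin r} {M : Finset (Sym2 (Fin n))}
    {e : Sym2 (Fin n)} (hM : Heterochromatic c M) (he : c e ∉ M.image c) :
    Heterochromatic c (insert e M) := by
  intro f hf g hg hfg
  rcases mem_insert.1 hf with rfl | hfM <;> rcases mem_insert.1 hg with rfl | hgM
  · exact absurd rfl hfg
  · exact fun h => he (mem_image.2 ⟨g, hgM, h.symm⟩)
  · exact fun h => he (mem_image.2 ⟨f, hfM, h⟩)
  · exact hM f hfM g hgM hfg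

lemma card_biUnion_toFinset_le (M : Finset (Sym2 (Fin n))) :
    #(M.biUnion Sym2.toFinset) ≤ 2 * #M := by
  refine card_biUnion_le.trans ?_
  rw [mul_comm, ← smul_eq_mul, ← sum_const]
  refine sum_le_sum fun e _ => ?_
  rw [Sym2.card_toFinset]
  split_ifs <;> omega

lemma exists_heterochromatic_matching_of_forall_exists {j : ℕ} {c : Sym2 (Fin n) → Fin r}
    (h : ∀ W : Finset (Fin n), #W ≤ 2 * j → ∀ C : Finset (Fin r), #C ≤ j →
      ∃ e ∈ edgesAvoiding W, c e ∉ C) :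
    ∃ M ∈ matchings n (j + 1), Heterochromatic c M := by
  suffices ∀ i ≤ j + 1, ∃ M, #M = i ∧ IsMatching M ∧ Heterochromatic c M by
    obtain ⟨M, hcard, hM, hc⟩ := this (j + 1) le_rfl
    exact ⟨M, mem_filter.2 ⟨mem_univ _, hcard, hM⟩, hc⟩
  intro i
  induction i with
  | zero => exact fun _ => ⟨∅, rfl, ⟨by simp, by simp⟩, by simp [Heterochromatic]⟩
  | succ i ih =>
    intro hi
    obtain ⟨M, hcard, hM, hc⟩ := ih (by omega)
    obtain ⟨e, he, hce⟩ := h (M.biUnion Sym2.toFinset)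
      ((card_biUnion_toFinset_le M).trans (by omega)) (M.image c)
      (card_image_le.trans (by omega))
    obtain ⟨hdiag, havoid⟩ := mem_edgesAvoiding.1 he
    have hdisj : ∀ v ∈ e, ∀ f ∈ M, v ∉ f := fun v hv f hf hvf =>
      havoid v hv (mem_biUnion.2 ⟨f, hf, Sym2.mem_toFinset.2 hvf⟩)
    have heM : e ∉ M := fun heM => hdisj _ (Sym2.out_fst_mem e) e heM (Sym2.out_fst_mem e)
    exact ⟨insert e M, by rw [card_insert_of_notMem heM, hcard], hM.insert hdiag hdisj,
      hc.insert hce⟩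

end Matchings

section Blocking

variable {n r j : ℕ}

/-- The obstruction to extending a heterochromatic `j`-matching greedily. -/
def IsBlocked (n r j : ℕ) (c : Sym2 (Fin n) → Fin r) : Prop :=
  ∃ W ∈ univ.filter (fun W : Finset (Fin n) => #W ≤ 2 * j),
    ∃ C ∈ powersetCard j (univ : Finset (Fin r)), ∀ e ∈ edgesAvoiding W, c e ∈ C

lemma exists_heterochromatic_matching_of_not_isBlocked {c : Sym2 (Fin n) → Fin r} (hjr : j ≤ r)
    (hc : ¬ IsBlocked n r j c) : ∃ M ∈ matchings n (j + 1), Heterochromatic c M := by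
  refine exists_heterochromatic_matching_of_forall_exists fun W hW C hC => ?_
  obtain ⟨C', hCC', hC'⟩ := exists_superset_card_eq hC (by simpa using hjr)
  by_contra! hall
  exact hc ⟨W, mem_filter.2 ⟨mem_univ _, hW⟩, C', mem_powersetCard.2 ⟨subset_univ _, hC'⟩,
    fun e he => hCC' (hall e he)⟩

lemma Pr_isBlocked_le (hjr : j < r) :
    Pr n r (IsBlocked n r j) ≤ 2 ^ n * r.choose j * ((j : ℚ) / r) ^ (n - 2 * j).choose 2 := by
  set Ws := univ.filter fun W : Finset (Fin n) => #W ≤ 2 * j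
  set q := (n - 2 * j).choose 2
  have hr : 0 < r := by omega
  have hx0 : 0 ≤ (j : ℚ) / r := by positivity
  have hx1 : (j : ℚ) / r ≤ 1 := div_le_one_of_le₀ (mod_cast hjr.le) (Nat.cast_nonneg _)
  have hWs : #Ws ≤ 2 ^ n := by
    simpa using card_filter_le univ fun W : Finset (Fin n) => #W ≤ 2 * j
  calc Pr n r (IsBlocked n r j)
      ≤ ∑ W ∈ Ws, ∑ C ∈ powersetCard j (univ : Finset (Fin r)),
          Pr n r (fun c => ∀ e ∈ edgesAvoiding W, c e ∈ C) :=
        (Pr_exists_le _ _).trans (sum_le_sum fun W _ => Pr_exists_le _ _)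
    _ ≤ ∑ W ∈ Ws, ∑ C ∈ powersetCard j (univ : Finset (Fin r)), ((j : ℚ) / r) ^ q := by
        gcongr with W hW C hC
        rw [Pr_forall_mem hr, (mem_powersetCard.1 hC).2, card_edgesAvoiding, Fintype.card_fin]
        exact pow_le_pow_of_le_one hx0 hx1
          (Nat.choose_le_choose 2 (by have := (mem_filter.1 hW).2; omega))
    _ ≤ 2 ^ n * r.choose j * ((j : ℚ) / r) ^ q := by
        simp only [sum_const, card_powersetCard, card_univ, Fintype.card_fin, nsmul_eq_mul,
          mul_assoc]
        gcongr
        exact_mod_cast hWs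

end Blocking

lemma choose_mul_div_pow_le_exp {r j q : ℕ} (hjr : j < r) (hjq : j ≤ q) :
    (r.choose j : ℝ) * ((j : ℝ) / r) ^ q ≤ Real.exp (j + 1 - q / (j + 1)) := by
  have hr : (0 : ℝ) < r := by exact_mod_cast (show 0 < r by omega)
  have hx0 : 0 ≤ (j : ℝ) / r := by positivity
  have hx : (j : ℝ) / r ≤ Real.exp (-1 / (j + 1)) := by
    calc (j : ℝ) / r ≤ j / (j + 1) := by
          gcongr
          exact_mod_cast hjr
      _ = -1 / (j + 1) + 1 := by field_simp; ring
      _ ≤ Real.exp (-1 / (j + 1)) := Real.add_one_le_exp _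
  have hhead : (r.choose j : ℝ) * ((j : ℝ) / r) ^ j ≤ Real.exp j := by
    calc (r.choose j : ℝ) * ((j : ℝ) / r) ^ j
        ≤ (r : ℝ) ^ j / j.factorial * ((j : ℝ) / r) ^ j := by
          gcongr
          exact Nat.choose_le_pow_div j r
      _ = (j : ℝ) ^ j / j.factorial := by rw [div_pow]; field_simp
      _ ≤ Real.exp j := Real.pow_div_factorial_le_exp _ (Nat.cast_nonneg j) j
  calc (r.choose j : ℝ) * ((j : ℝ) / r) ^ q
      = (r.choose j : ℝ) * ((j : ℝ) / r) ^ j * ((j : ℝ) / r) ^ (q - j) := by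
        rw [mul_assoc, ← pow_add, Nat.add_sub_cancel' hjq]
    _ ≤ Real.exp j * Real.exp (-1 / (j + 1)) ^ (q - j) := by gcongr
    _ = Real.exp (j - (q - j) / (j + 1)) := by
        rw [← Real.exp_nat_mul, ← Real.exp_add, Nat.cast_sub hjq]
        ring_nf
    _ ≤ Real.exp (j + 1 - q / (j + 1)) := by
        refine Real.exp_le_exp.2 ?_
        rw [sub_div]
        have : (j : ℝ) / (j + 1) ≤ 1 := div_le_one_of_le₀ (by linarith) (by positivity)
        linarith

lemma sq_le_eight_mul_choose_two {n j : ℕ} (hn : 4 * (j + 1) ≤ n) :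
    (n : ℝ) ^ 2 ≤ 8 * (n - 2 * j).choose 2 := by
  have hm : ((n - 2 * j : ℕ) : ℝ) = n - 2 * j := by push_cast [show 2 * j ≤ n by omega]; ring
  have hn' : (4 * (j + 1) : ℝ) ≤ n := by exact_mod_cast hn
  rw [Nat.cast_choose_two, hm]
  nlinarith

lemma Pr_isBlocked_le_exp {n r j : ℕ} (hjr : j < r) (hn : 4 * (j + 1) ≤ n) :
    (Pr n r (IsBlocked n r j) : ℝ) ≤ Real.exp (2 * n - (n : ℝ) ^ 2 / (8 * (j + 1))) := by
  have hcount := (Rat.cast_le (K := ℝ)).2 (Pr_isBlocked_le (n := n) hjr)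
  have hq := sq_le_eight_mul_choose_two hn
  push_cast at hcount
  set q := (n - 2 * j).choose 2
  have hn' : (4 * (j + 1) : ℝ) ≤ n := by exact_mod_cast hn
  have hjq : j ≤ q := by
    have : (j : ℝ) ≤ q := by nlinarith
    exact_mod_cast this
  calc (Pr n r (IsBlocked n r j) : ℝ)
      ≤ 2 ^ n * (r.choose j * ((j : ℝ) / r) ^ q) := by rwa [← mul_assoc]
    _ ≤ Real.exp n * Real.exp (j + 1 - q / (j + 1)) := by
        gcongr
        · rw [← Real.exp_one_pow]
          gcongr
          linarith [Real.add_one_le_exp (1 : ℝ)]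
        · exact choose_mul_div_pow_le_exp hjr hjq
    _ ≤ Real.exp (2 * n - (n : ℝ) ^ 2 / (8 * (j + 1))) := by
        rw [← Real.exp_add]
        refine Real.exp_le_exp.2 ?_
        have : (n : ℝ) ^ 2 / (8 * (j + 1)) ≤ q / (j + 1) := by
          rw [div_le_div_iff₀ (by positivity) (by positivity)]
          nlinarith
        linarith

lemma one_sub_Pr_isBlocked_le {n r j : ℕ} (hjr : j < r) :
    1 - Pr n r (IsBlocked n r j) ≤
      Pr n r (fun c => ∃ M ∈ matchings n (j + 1), Heterochromatic c M) := by
  have hbad : Pr n r (fun c => ¬ ∃ M ∈ matchings n (j + 1), Heterochromatic c M) ≤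
      Pr n r (IsBlocked n r j) :=
    Pr_mono fun c hc => by_contra fun hb =>
      hc (exists_heterochromatic_matching_of_not_isBlocked hjr.le hb)
  linarith [Pr_add_Pr_not (show 0 < r by omega)
    (fun c => ∃ M ∈ matchings n (j + 1), Heterochromatic c M)]

lemma tendsto_two_mul_sub_rpow_div_atBot {ε : ℝ} (hε : 0 < ε) :
    Tendsto (fun x : ℝ => 2 * x - x ^ (1 + ε) / 8) atTop atBot := by
  have hfac : Tendsto (fun x : ℝ => x * (2 - x ^ ε / 8)) atTop atBot :=
    tendsto_id.atTop_mul_atBot₀ (tendsto_atBot_add_const_left _ _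
      (tendsto_neg_atTop_atBot.comp ((tendsto_rpow_atTop hε).atTop_div_const (by norm_num))))
  refine hfac.congr' ?_
  filter_upwards [eventually_gt_atTop 0] with x hx
  rw [Real.rpow_add hx, Real.rpow_one]
  ring

lemma mul_rpow_le_of_le_rpow_sub {x y a b : ℝ} (hx : 0 ≤ x) (hy : y ≤ x ^ (a - b))
    (ha : a ≠ 0) : y * x ^ b ≤ x ^ a := by
  calc y * x ^ b ≤ x ^ (a - b) * x ^ b := by gcongr
    _ = x ^ a := by rw [← Real.rpow_add' hx (by simpa using ha), sub_add_cancel]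

theorem hetero_matching_exists_general (ε : ℝ) (hε0 : 0 < ε)
    (k r : ℕ → ℕ)
    (h : ∀ᶠ n in atTop,
      1 ≤ k n ∧ (k n : ℝ) ≤ (n : ℝ) ^ ((1 : ℝ) - ε) ∧ k n ≤ r n) :
    Tendsto
      (fun n =>
        ((Pr n (r n)
            (fun c => ∃ M ∈ matchings n (k n), Heterochromatic c M) : ℚ) : ℝ))
      atTop (nhds 1) := by
  have hlower : Tendsto (fun n : ℕ => 1 - Real.exp (2 * n - (n : ℝ) ^ (1 + ε) / 8))
      atTop (nhds 1) := by
    simpa using tendsto_const_nhds.sub (Real.tendsto_exp_atBot.comp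
      ((tendsto_two_mul_sub_rpow_div_atBot hε0).comp tendsto_natCast_atTop_atTop))
  refine tendsto_of_tendsto_of_tendsto_of_le_of_le' hlower tendsto_const_nhds ?_
    (Eventually.of_forall fun n => mod_cast Pr_le_one _)
  have hpow : ∀ᶠ n : ℕ in atTop, (4 : ℝ) ≤ (n : ℝ) ^ ε :=
    ((tendsto_rpow_atTop hε0).comp tendsto_natCast_atTop_atTop).eventually_ge_atTop 4
  filter_upwards [h, hpow] with n ⟨hk1, hkn, hkr⟩ h4
  obtain ⟨j, hj⟩ : ∃ j, k n = j + 1 := ⟨k n - 1, by omega⟩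
  rw [hj] at hkn hkr ⊢
  push_cast at hkn
  have hn0 : (0 : ℝ) ≤ n := Nat.cast_nonneg n
  have hjn : 4 * (j + 1) ≤ n := by
    have := mul_rpow_le_of_le_rpow_sub hn0 hkn one_ne_zero
    rw [Real.rpow_one] at this
    exact_mod_cast (show (4 * (j + 1) : ℝ) ≤ n by nlinarith)
  have hsq := mul_rpow_le_of_le_rpow_sub (a := 2) (b := 1 + ε) hn0 (by ring_nf; exact hkn)
    two_ne_zero
  rw [Real.rpow_two] at hsq
  calc 1 - Real.exp (2 * n - (n : ℝ) ^ (1 + ε) / 8)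
      ≤ 1 - Real.exp (2 * n - (n : ℝ) ^ 2 / (8 * (j + 1))) := by
        refine sub_le_sub_left (Real.exp_le_exp.2 (sub_le_sub_left ?_ _)) _
        rw [div_le_div_iff₀ (by norm_num) (by positivity)]
        linarith
    _ ≤ 1 - (Pr n (r n) (IsBlocked n (r n) j) : ℝ) :=
        sub_le_sub_left (Pr_isBlocked_le_exp (by omega) hjn) _
    _ ≤ _ := by exact_mod_cast one_sub_Pr_isBlocked_le (by omega)

/-- if `1 ≤ k(n) ≤ n^(1-ε)` and `r(n) ≥ k(n)`, then the
probability of containing a heterochromatic `k(n)`-matching tends to `1`. -/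
theorem hetero_matching_exists (ε : ℝ) (hε0 : 0 < ε) (hε1 : ε < 1)
    (k r : ℕ → ℕ)
    (h : ∀ᶠ n in atTop,
      1 ≤ k n ∧ (k n : ℝ) ≤ (n : ℝ) ^ ((1 : ℝ) - ε) ∧ k n ≤ r n) :
    Tendsto
      (fun n =>
        ((Pr n (r n)
            (fun c => ∃ M ∈ matchings n (k n), Heterochromatic c M) : ℚ) : ℝ))
      atTop (nhds 1) :=
  hetero_matching_exists_general ε hε0 k r h

end
end

section
/- If 2 ≤ k = k(n) ≤ log n and r = r(n) ≥ k(n) - 1, then the probability that a uniformly random r-coloring of the edges of K_n contains a heterochromatic tree on k vertices tends to 1 as n → ∞. -/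
open Finset Filter

open scoped Classical

noncomputable section

/-!
Fix a vertex `v`. If the `n - 1` edges at `v` carry at least `k - 1` colours, one edge of each of
`k - 1` colours forms a heterochromatic star on `k` vertices. Otherwise the colours at `v` lie in
some `(k - 2)`-set of colours; by a union bound over these sets, and since `k - 1 ≤ r` and
`k ≤ log n`, this has probability at most
`C(r, k-2) ((k-2)/r)^(n-1) ≤ (k-1)^(k-2) (1 - 1/(k-1))^(n-1)`,
which is at most `exp (log² n - (n-1)/log n) ≤ 1/n`.
-/

def HasHeterochromaticTree {n r : ℕ} (c : Sym2 (Fin n) → Fin r) (k : ℕ) : Prop :=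
  ∃ S : Finset (Fin n), ∃ T, S.card = k ∧ IsTreeOn S T ∧ Heterochromatic c T

lemma hasHeterochromaticTree_of_injOn_star {n r : ℕ} (c : Sym2 (Fin n) → Fin r) {v : Fin n}
    {L : Finset (Fin n)} (hv : v ∉ L) (hL : Set.InjOn (fun i => c s(v, i)) L) :
    HasHeterochromaticTree c (#L + 1) := by
  have hedge : Set.InjOn (fun i => s(v, i)) L := fun i _ j _ hij => Sym2.congr_right.1 hij
  set G := SimpleGraph.fromEdgeSet (L.image fun i => s(v, i) : Set (Sym2 (Fin n)))
  have hadj : ∀ u ∈ L, G.Adj v u := fun u hu => by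
    rw [SimpleGraph.fromEdgeSet_adj, coe_image]
    exact ⟨⟨u, hu, rfl⟩, fun hvu => hv (hvu ▸ hu)⟩
  refine ⟨insert v L, L.image fun i => s(v, i), card_insert_of_notMem hv,
    ⟨?_, ?_, ?_, ?_⟩, ?_⟩
  · rw [card_image_of_injOn hedge, card_insert_of_notMem hv]
  · simp only [mem_image]
    rintro _ ⟨u, hu, rfl⟩ hdiag
    exact hv (Sym2.mk_isDiag_iff.1 hdiag ▸ hu)
  · simp only [mem_image]
    rintro _ ⟨u, hu, rfl⟩ w hw
    rcases Sym2.mem_iff.1 hw with rfl | rfl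
    exacts [mem_insert_self _ _, mem_insert_of_mem hu]
  · have hreach : ∀ u ∈ insert v L, G.Reachable v u := by
      intro u hu
      rcases mem_insert.1 hu with rfl | hu
      exacts [.refl _, (hadj u hu).reachable]
    exact fun u hu w hw => (hreach u hu).symm.trans (hreach w hw)
  · intro e he f hf hne hc
    obtain ⟨u, hu, rfl⟩ := mem_image.1 he
    obtain ⟨w, hw, rfl⟩ := mem_image.1 hf
    exact hne (congrArg _ (hL hu hw hc))

lemma hasHeterochromaticTree_of_le_card_image_star {n r k : ℕ} (c : Sym2 (Fin n) → Fin r)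
    (v : Fin n) (hk : k ≤ #((univ.erase v).image fun i => c s(v, i))) :
    HasHeterochromaticTree c (k + 1) := by
  obtain ⟨t, ht, rfl⟩ := exists_subset_card_eq hk
  obtain ⟨L, hLv, hL, rfl⟩ :=
    exists_subset_injOn_image_eq_of_surjOn (univ.erase v : Set (Fin n)) t fun x hx => by
      simpa using ht hx
  rw [card_image_of_injOn hL]
  exact hasHeterochromaticTree_of_injOn_star c (fun hv => by simpa using hLv hv) hL

lemma card_filter_forall_mem_mul {ι κ : Type*} [Fintype ι] [Fintype κ] [DecidableEq ι]
    [DecidableEq κ] (S : Finset ι) (A : Finset κ) :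
    #{c : ι → κ | ∀ i ∈ S, c i ∈ A} * Fintype.card κ ^ #S
      = #A ^ #S * Fintype.card κ ^ Fintype.card ι := by
  have hpi : ({c : ι → κ | ∀ i ∈ S, c i ∈ A} : Finset (ι → κ))
      = Fintype.piFinset fun i => if i ∈ S then A else univ := by
    ext c
    simp only [mem_filter, mem_univ, true_and, Fintype.mem_piFinset]
    exact ⟨fun h i => by split_ifs with hi <;> simp [h i, hi],
      fun h i hi => by simpa [hi] using h i⟩
  simp only [hpi, Fintype.card_piFinset, apply_ite card, card_univ]
  rw [prod_ite, prod_const, prod_const, filter_mem_eq_inter, univ_inter, filter_not,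
    filter_mem_eq_inter, univ_inter, mul_assoc, ← pow_add, card_sdiff_of_subset (subset_univ S),
    card_univ, Nat.sub_add_cancel (card_le_univ S)]

lemma card_filter_card_image_le_mul {ι κ : Type*} [Fintype ι] [Fintype κ] [DecidableEq ι]
    [DecidableEq κ] (S : Finset ι) {j : ℕ} (hj : j ≤ Fintype.card κ) :
    #{c : ι → κ | #(S.image c) ≤ j} * Fintype.card κ ^ #S
      ≤ (Fintype.card κ).choose j * j ^ #S * Fintype.card κ ^ Fintype.card ι := by
  have hcover : ({c : ι → κ | #(S.image c) ≤ j} : Finset (ι → κ))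
      ⊆ (powersetCard j univ).biUnion fun A => {c | ∀ i ∈ S, c i ∈ A} := by
    intro c hc
    obtain ⟨A, hcA, hA, hAj⟩ := exists_subsuperset_card_eq (subset_univ (S.image c))
      (mem_filter.1 hc).2 (by rwa [card_univ])
    simp only [mem_biUnion, mem_powersetCard, mem_filter, mem_univ, true_and]
    exact ⟨A, ⟨hA, hAj⟩, fun i hi => hcA (mem_image_of_mem c hi)⟩
  calc #{c : ι → κ | #(S.image c) ≤ j} * Fintype.card κ ^ #S
      ≤ (∑ A ∈ powersetCard j univ, #{c : ι → κ | ∀ i ∈ S, c i ∈ A})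
          * Fintype.card κ ^ #S := by
        gcongr
        exact (card_le_card hcover).trans card_biUnion_le
    _ = ∑ A ∈ powersetCard j (univ : Finset κ),
          j ^ #S * Fintype.card κ ^ Fintype.card ι := by
        rw [sum_mul]
        refine sum_congr rfl fun A hA => ?_
        rw [card_filter_forall_mem_mul, (mem_powersetCard.1 hA).2]
    _ = _ := by rw [sum_const, card_powersetCard, card_univ, smul_eq_mul, mul_assoc]

lemma pr_le_one (n r : ℕ) (P : (Sym2 (Fin n) → Fin r) → Prop) : Pr n r P ≤ 1 :=
  div_le_one_of_le₀ (by exact_mod_cast card_le_univ _) (Nat.cast_nonneg _)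

lemma one_sub_card_div_le_pr {n r : ℕ} (hr : 0 < r) {P : (Sym2 (Fin n) → Fin r) → Prop}
    (B : Finset (Sym2 (Fin n) → Fin r)) (hB : ∀ c, ¬ P c → c ∈ B) :
    1 - (#B : ℝ) / Fintype.card (Sym2 (Fin n) → Fin r) ≤ (Pr n r P : ℝ) := by
  have hN : (0 : ℝ) < Fintype.card (Sym2 (Fin n) → Fin r) := by
    have : Nonempty (Fin r) := ⟨⟨0, hr⟩⟩
    exact_mod_cast Fintype.card_pos
  have hcount : Fintype.card (Sym2 (Fin n) → Fin r) ≤ #{c | P c} + #B := by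
    rw [← card_univ, ← card_filter_add_card_filter_not (s := univ) P]
    exact Nat.add_le_add_left (card_le_card fun c hc => hB c (mem_filter.1 hc).2) _
  rw [Pr, Rat.cast_div, Rat.cast_natCast, Rat.cast_natCast, sub_le_iff_le_add, ← add_div,
    le_div_iff₀ hN, one_mul]
  exact_mod_cast hcount

lemma one_sub_choose_mul_le_pr_hasHeterochromaticTree {n r j : ℕ} (hn : 0 < n) (hjr : j < r) :
    1 - r.choose j * ((j : ℝ) / r) ^ (n - 1)
      ≤ (Pr n r (fun c => HasHeterochromaticTree c (j + 2)) : ℝ) := by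
  have hr : 0 < r := by omega
  set v : Fin n := ⟨0, hn⟩
  set E := (univ.erase v).image fun i => s(v, i)
  have hE : #E = n - 1 := by
    rw [card_image_of_injOn fun i _ j _ hij => Sym2.congr_right.1 hij,
      card_erase_of_mem (mem_univ v), card_univ, Fintype.card_fin]
  have hgood : ∀ c : Sym2 (Fin n) → Fin r, ¬ HasHeterochromaticTree c (j + 2) →
      c ∈ ({c | #(E.image c) ≤ j} : Finset _) := by
    intro c hc
    by_contra hbad
    refine hc (hasHeterochromaticTree_of_le_card_image_star c v ?_)
    simpa [E, image_image, Function.comp_def] using hbad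
  have hcount := card_filter_card_image_le_mul (κ := Fin r) E (j := j) (by simpa using hjr.le)
  simp only [Fintype.card_fin, hE] at hcount
  refine le_trans ?_ (one_sub_card_div_le_pr hr _ hgood)
  have hr' : (0 : ℝ) < r := by exact_mod_cast hr
  gcongr
  rw [Fintype.card_fun, Fintype.card_fin, Nat.cast_pow, div_pow, ← mul_div_assoc,
    div_le_div_iff₀ (by positivity) (by positivity)]
  exact_mod_cast hcount

lemma choose_mul_div_pow_le {r j m : ℕ} (hjr : j < r) (hjm : j ≤ m) :
    r.choose j * ((j : ℝ) / r) ^ m ≤ ((j : ℝ) + 1) ^ j * ((j : ℝ) / (j + 1)) ^ m := by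
  obtain ⟨t, rfl⟩ := Nat.exists_eq_add_of_le hjm
  have hr : (j : ℝ) + 1 ≤ r := by exact_mod_cast hjr
  have hchoose : (r.choose j : ℝ) ≤ (r : ℝ) ^ j := by exact_mod_cast r.choose_le_pow j
  calc r.choose j * ((j : ℝ) / r) ^ (j + t)
      ≤ (r : ℝ) ^ j * ((j : ℝ) / r) ^ (j + t) := by gcongr
    _ = (j : ℝ) ^ (j + t) / (r : ℝ) ^ t := by
        rw [div_pow, pow_add (r : ℝ), mul_div_assoc',
          mul_div_mul_left _ _ (pow_ne_zero j (by linarith))]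
    _ ≤ (j : ℝ) ^ (j + t) / ((j : ℝ) + 1) ^ t := by gcongr
    _ = ((j : ℝ) + 1) ^ j * ((j : ℝ) / (j + 1)) ^ (j + t) := by
        rw [div_pow, pow_add ((j : ℝ) + 1)]
        field_simp

lemma pow_mul_div_pow_le_exp {j m : ℕ} {L : ℝ} (hjL : (j : ℝ) + 1 ≤ L) :
    ((j : ℝ) + 1) ^ j * ((j : ℝ) / (j + 1)) ^ m ≤ Real.exp (L ^ 2 - m / L) := by
  have hL : 0 < L := by linarith [j.cast_nonneg (α := ℝ)]
  have hbase : ((j : ℝ) + 1) ^ j ≤ Real.exp (L ^ 2) := by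
    calc ((j : ℝ) + 1) ^ j ≤ Real.exp ((j : ℝ) + 1) ^ j := by
          gcongr
          linarith [Real.add_one_le_exp ((j : ℝ) + 1)]
      _ = Real.exp (j * ((j : ℝ) + 1)) := by rw [← Real.exp_nat_mul]
      _ ≤ Real.exp (L ^ 2) := by gcongr; nlinarith [j.cast_nonneg (α := ℝ)]
  have hratio : (j : ℝ) / (j + 1) ≤ Real.exp (-(1 / L)) := by
    calc (j : ℝ) / (j + 1) = -(1 / (j + 1)) + 1 := by field_simp; ring
      _ ≤ -(1 / L) + 1 := by gcongr
      _ ≤ Real.exp (-(1 / L)) := Real.add_one_le_exp _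
  calc ((j : ℝ) + 1) ^ j * ((j : ℝ) / (j + 1)) ^ m
      ≤ Real.exp (L ^ 2) * Real.exp (-(1 / L)) ^ m := by gcongr
    _ = Real.exp (L ^ 2 - m / L) := by
        rw [← Real.exp_nat_mul, ← Real.exp_add]
        ring_nf

lemma eventually_sq_log_sub_div_log_le_neg_log :
    ∀ᶠ x : ℝ in atTop, Real.log x ^ 2 - (x - 1) / Real.log x ≤ -Real.log x := by
  filter_upwards [(Real.isLittleO_pow_log_id_atTop (n := 3)).bound (c := 1 / 3) (by norm_num),
    (Real.isLittleO_pow_log_id_atTop (n := 2)).bound (c := 1 / 3) (by norm_num),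
    eventually_ge_atTop 3] with x hcube hsq hx
  have hL : 1 ≤ Real.log x := by
    rw [Real.le_log_iff_exp_le (by positivity)]
    linarith [Real.exp_one_lt_d9]
  simp only [Real.norm_eq_abs, id, abs_pow, abs_of_nonneg (by linarith : (0 : ℝ) ≤ Real.log x),
    abs_of_nonneg (by linarith : (0 : ℝ) ≤ x)] at hcube hsq
  rw [sub_le_iff_le_add, ← sub_le_iff_le_add', le_div_iff₀ (by linarith)]
  nlinarith

/-- if `2 ≤ k(n) ≤ log n` and `r(n) ≥ k(n) - 1`, then the
probability that a heterochromatic `k(n)`-tree exists tends to `1`. -/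
theorem hetero_tree_exists (k r : ℕ → ℕ)
    (h : ∀ᶠ n in atTop,
      2 ≤ k n ∧ (k n : ℝ) ≤ Real.log n ∧ k n - 1 ≤ r n) :
    Tendsto
      (fun n =>
        ((Pr n (r n)
            (fun c => ∃ S : Finset (Fin n), ∃ T,
              S.card = k n ∧ IsTreeOn S T ∧ Heterochromatic c T) : ℚ) : ℝ))
      atTop (nhds 1) := by
  have hlower : ∀ᶠ n : ℕ in atTop,
      1 - 1 / (n : ℝ) ≤ (Pr n (r n) (fun c => HasHeterochromaticTree c (k n)) : ℝ) := by
    filter_upwards [h, tendsto_natCast_atTop_atTop.eventually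
      eventually_sq_log_sub_div_log_le_neg_log, eventually_gt_atTop 0]
      with n ⟨hk, hkL, hkr⟩ hL hn
    obtain ⟨j, hj⟩ := Nat.exists_eq_add_of_le' hk
    have hlog : Real.log n ≤ n - 1 := Real.log_le_sub_one_of_pos (by positivity)
    have hjL : (j : ℝ) + 1 ≤ Real.log n := by rw [hj] at hkL; push_cast at hkL; linarith
    have hjn : j ≤ n - 1 := by
      have hkn : k n + 1 ≤ n := by exact_mod_cast (show (k n : ℝ) + 1 ≤ n by linarith)
      omega
    rw [hj]
    calc 1 - 1 / (n : ℝ) = 1 - Real.exp (-Real.log n) := by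
          rw [Real.exp_neg, Real.exp_log (by positivity), one_div]
      _ ≤ 1 - Real.exp (Real.log n ^ 2 - ((n - 1 : ℕ) : ℝ) / Real.log n) := by
          rw [Nat.cast_sub hn, Nat.cast_one]
          gcongr
      _ ≤ 1 - (r n).choose j * ((j : ℝ) / r n) ^ (n - 1) := by
          gcongr
          exact (choose_mul_div_pow_le (by omega) hjn).trans (pow_mul_div_pow_le_exp hjL)
      _ ≤ _ := one_sub_choose_mul_le_pr_hasHeterochromaticTree hn (by omega)
  refine tendsto_of_tendsto_of_tendsto_of_le_of_le' ?_ tendsto_const_nhds hlower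
    (Eventually.of_forall fun n => by exact_mod_cast pr_le_one n (r n) _)
  simpa using tendsto_const_nhds.sub (tendsto_one_div_atTop_nhds_zero_nat (𝕜 := ℝ))

end
end
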